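/- Let G be a graph satisfying the doubled crystal axioms, and let g be a highest-weight element of a connected component (i.e., ε_i(g) = 0 for all i). Then wt(g) = (a_1, ..., a_n) satisfies a_i ≥ a_{i+1} for all i, and moreover a_i > a_{i+1} whenever a_i > 0; that is, wt(g) is a strict partition. -/
import Mathlib


/-- A "doubled crystal": a finite directed graph with vertices weighted by
`ℤ_{≥0}^n` and edges labeled `1', 1, …, (n-1)', n-1`, satisfying the axioms
(B1)–(B3), (K), (A1)–(A8) and the dual axioms (A1*)–(A8*) of
Gillespie–Levinson's "Axioms for shifted tableau crystals".

`F i false` is the unprimed lowering operator `f_i`, `F i true` is the primed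
lowering operator `f_i'`; similarly for the raising operators `E`.  The
statistics `eps, phi` are the total distances to the top and bottom of the
`{i,i'}`-string; `epsP, phiP` count only primed edges and `epsH, phiH`
count only unprimed edges. -/
structure DoubledCrystal (n : ℕ) where
  B : Type
  fintype : Fintype B
  F : Fin (n - 1) → Bool → B → Option B
  E : Fin (n - 1) → Bool → B → Option B
  wt : B → Fin n → ℕ
  eps : Fin (n - 1) → B → ℕ
  phi : Fin (n - 1) → B → ℕ
  epsP : Fin (n - 1) → B → ℕ
  phiP : Fin (n - 1) → B → ℕ
  epsH : Fin (n - 1) → B → ℕ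
  phiH : Fin (n - 1) → B → ℕ
  /-- `e_i, f_i` (and `e_i', f_i'`) are partial inverses. -/
  inverse : ∀ (i : Fin (n - 1)) (p : Bool) (x y : B),
    F i p x = some y ↔ E i p y = some x
  /-- (K1): effect of a raising operator on the weight. -/
  K1wt : ∀ (i : Fin (n - 1)) (p : Bool) (x y : B), E i p x = some y →
    ∀ j : Fin n, (wt y j : ℤ) = (wt x j : ℤ) +
      (if (j : ℕ) = (i : ℕ) then 1 else if (j : ℕ) = (i : ℕ) + 1 then -1 else 0)
  /-- (K1): effect of a raising operator on the statistics `ε_i, φ_i`. -/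
  K1len : ∀ (i : Fin (n - 1)) (p : Bool) (x y : B), E i p x = some y →
    eps i y + 1 = eps i x ∧ phi i y = phi i x + 1
  /-- (K2): `φ_i(x) - ε_i(x) = wt_i(x) - wt_{i+1}(x)`. -/
  K2 : ∀ (i : Fin (n - 1)) (x : B),
    (phi i x : ℤ) - (eps i x : ℤ) =
      (wt x ⟨(i : ℕ), by have := i.isLt; omega⟩ : ℤ) -
      (wt x ⟨(i : ℕ) + 1, by have := i.isLt; omega⟩ : ℤ)
  /-- The unprimed/primed lowering operators are defined iff `φ̂_i`/`φ'_i` is positive. -/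
  F_none : ∀ (i : Fin (n - 1)) (x : B),
    (F i false x = none ↔ phiH i x = 0) ∧ (F i true x = none ↔ phiP i x = 0)
  /-- The unprimed/primed raising operators are defined iff `ε̂_i`/`ε'_i` is positive. -/
  E_none : ∀ (i : Fin (n - 1)) (x : B),
    (E i false x = none ↔ epsH i x = 0) ∧ (E i true x = none ↔ epsP i x = 0)
  /-- Along an unprimed `i`-edge, the unprimed statistics shift by one. -/
  Fstep : ∀ (i : Fin (n - 1)) (x y : B), F i false x = some y →
    epsH i y = epsH i x + 1 ∧ phiH i x = phiH i y + 1
  /-- Along a primed `i`-edge, the primed statistics shift by one. -/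
  FstepP : ∀ (i : Fin (n - 1)) (x y : B), F i true x = some y →
    epsP i y = epsP i x + 1 ∧ phiP i x = phiP i y + 1
  /-- Along a strictly unprimed `i`-edge (separated string), the primed statistics
  do not change. -/
  Fsep : ∀ (i : Fin (n - 1)) (x y : B), F i false x = some y → F i true x ≠ some y →
    epsP i y = epsP i x ∧ phiP i y = phiP i x
  /-- Along a strictly primed `i`-edge (separated string), the unprimed statistics
  do not change. -/
  FsepP : ∀ (i : Fin (n - 1)) (x y : B), F i true x = some y → F i false x ≠ some y →
    epsH i y = epsH i x ∧ phiH i y = phiH i x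
  /-- (B1): every vertex lies either on a collapsed `{i,i'}`-string (all edges both
  primed and unprimed, all statistics equal, with top/bottom characterized by
  the vanishing of `wt_{i+1}`/`wt_i`), or on a separated string (total statistics
  split into primed and unprimed parts, with exactly one primed edge between
  the top and the bottom). -/
  B1 : ∀ (i : Fin (n - 1)) (v : B),
    (F i false v = F i true v ∧ E i false v = E i true v ∧
      epsP i v = eps i v ∧ epsH i v = eps i v ∧
      phiP i v = phi i v ∧ phiH i v = phi i v ∧
      (eps i v = 0 ↔ wt v ⟨(i : ℕ) + 1, by have := i.isLt; omega⟩ = 0) ∧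
      (phi i v = 0 ↔ wt v ⟨(i : ℕ), by have := i.isLt; omega⟩ = 0)) ∨
    (eps i v = epsP i v + epsH i v ∧ phi i v = phiP i v + phiH i v ∧
      epsP i v + phiP i v = 1)
  /-- (B1): if `wt_{i+1}(v) = 0` then `v` is the top of a collapsed `{i,i'}`-string. -/
  B1top : ∀ (i : Fin (n - 1)) (v : B),
    wt v ⟨(i : ℕ) + 1, by have := i.isLt; omega⟩ = 0 →
      eps i v = 0 ∧ F i false v = F i true v
  /-- (B1): if `wt_i(v) = 0` then `v` is the bottom of a collapsed `{i,i'}`-string. -/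
  B1bot : ∀ (i : Fin (n - 1)) (v : B),
    wt v ⟨(i : ℕ), by have := i.isLt; omega⟩ = 0 →
      phi i v = 0 ∧ E i false v = E i true v
  /-- (B2): distant edges commute (lowering). -/
  B2f : ∀ (i j : Fin (n - 1)) (p q : Bool) (w x y : B),
    ((i : ℕ) + 1 < (j : ℕ) ∨ (j : ℕ) + 1 < (i : ℕ)) →
    F i p w = some x → F j q w = some y →
    ∃ z, F j q x = some z ∧ F i p y = some z
  /-- (B2): distant edges commute (raising). -/
  B2e : ∀ (i j : Fin (n - 1)) (p q : Bool) (w x y : B),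
    ((i : ℕ) + 1 < (j : ℕ) ∨ (j : ℕ) + 1 < (i : ℕ)) →
    E i p w = some x → E j q w = some y →
    ∃ z, E j q x = some z ∧ E i p y = some z
  /-- (B3): the lengths axiom for an `(i±1)`- or `(i±1)'`-edge `z → w`. -/
  B3 : ∀ (i j : Fin (n - 1)) (p : Bool) (z w : B),
    ((i : ℕ) = (j : ℕ) + 1 ∨ (j : ℕ) = (i : ℕ) + 1) →
    F j p z = some w →
    (eps i w = eps i z ∧ phi i w = phi i z + 1) ∨
    (eps i w + 1 = eps i z ∧ phi i w = phi i z)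
  /-- (A1) Primed square. -/
  A1 : ∀ (i j : Fin (n - 1)) (w x y : B), (i : ℕ) + 1 = (j : ℕ) →
    F i true w = some x → F j true w = some y →
    ∃ z, F j true x = some z ∧ F i true y = some z
  /-- (A2) Half-solid square. -/
  A2 : ∀ (i j : Fin (n - 1)) (w x y : B), (i : ℕ) + 1 = (j : ℕ) →
    F i true w = some x → F j true w = some y →
    (((∃ z, F j false x = some z ∧ F i false y = some z) ∧
        F i true y ≠ F i false y) ↔
      (eps i w = eps i y ∧ eps j w = eps j x ∧ phi j w = 1 ∧ phiH j w = 0))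
  /-- (A3) Square for `{f_i', f_{i+1}}`. -/
  A3 : ∀ (i j : Fin (n - 1)) (w x y : B), (i : ℕ) + 1 = (j : ℕ) →
    F i true w = some x → F j false w = some y →
    (F j true w ≠ some y ∨ F i false w ≠ some x) →
    ∃ z, F j false x = some z ∧ F i true y = some z
  /-- (A4) Square for `{f_i, f_{i+1}'}`. -/
  A4 : ∀ (i j : Fin (n - 1)) (w x y : B), (i : ℕ) + 1 = (j : ℕ) →
    F i false w = some x → F j true w = some y →
    ((∃ z, F j true x = some z ∧ F i false y = some z) ↔ 0 < epsH i w)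
  /-- (A5) Half-primed square. -/
  A5 : ∀ (i j : Fin (n - 1)) (w x y : B), (i : ℕ) + 1 = (j : ℕ) →
    F i false w = some x → F j false w = some y → F i true w = none →
    ((∃ z, F j true x = some z ∧ F i true y = some z) ↔
      (eps i w = eps i y + 1 ∧ eps j w = eps j x + 1))
  /-- (A6) Square. -/
  A6 : ∀ (i j : Fin (n - 1)) (w x y : B), (i : ℕ) + 1 = (j : ℕ) →
    F i false w = some x → F j false w = some y → F i true w = none →
    ((∃ z, F j false x = some z ∧ F i false y = some z) ↔
      ((eps i w = eps i y + 1 ∧ eps j w = eps j x) ∨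
       (eps i w = eps i y ∧ eps j w = eps j x + 1)))
  /-- (A7) Half-primed octagon. -/
  A7 : ∀ (i j : Fin (n - 1)) (w x y : B), (i : ℕ) + 1 = (j : ℕ) →
    F i false w = some x → F j false w = some y → F i true w = none →
    (((∃ z, ((F i false y).bind (F i true)).bind (F j false) = some z ∧
            ((F j false x).bind (F j false)).bind (F i true) = some z) ∧
        F j false x ≠ F i false y) ↔
      (eps i w = eps i y ∧ eps j w = eps j x ∧ epsH i w + 1 = epsH i y))
  /-- (A8) Octagon. -/
  A8 : ∀ (i j : Fin (n - 1)) (w x y : B), (i : ℕ) + 1 = (j : ℕ) →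
    F i false w = some x → F j false w = some y → F i true w = none →
    (((∃ z, ((F i false y).bind (F i false)).bind (F j false) = some z ∧
            ((F j false x).bind (F j false)).bind (F i false) = some z) ∧
        F j false x ≠ F i false y) ↔
      (eps i w = eps i y ∧ eps j w = eps j x ∧ 2 ≤ phiH i y))
  /-- (A1*) Dual primed square. -/
  A1d : ∀ (i j : Fin (n - 1)) (w x y : B), (i : ℕ) + 1 = (j : ℕ) →
    E j true w = some x → E i true w = some y →
    ∃ z, E i true x = some z ∧ E j true y = some z
  /-- (A2*) Dual half-solid square. -/
  A2d : ∀ (i j : Fin (n - 1)) (w x y : B), (i : ℕ) + 1 = (j : ℕ) →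
    E j true w = some x → E i true w = some y →
    (((∃ z, E j false y = some z ∧ E i false x = some z) ∧
        E j true y ≠ E j false y) ↔
      (phi j w = phi j y ∧ phi i w = phi i x ∧ eps i w = 1 ∧ epsH i w = 0))
  /-- (A3*) Dual square for `{e_{i+1}', e_i}`. -/
  A3d : ∀ (i j : Fin (n - 1)) (w x y : B), (i : ℕ) + 1 = (j : ℕ) →
    E j true w = some x → E i false w = some y →
    (E i true w ≠ some y ∨ E j false w ≠ some x) →
    ∃ z, E i false x = some z ∧ E j true y = some z
  /-- (A4*) Dual square for `{e_{i+1}, e_i'}`. -/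
  A4d : ∀ (i j : Fin (n - 1)) (w x y : B), (i : ℕ) + 1 = (j : ℕ) →
    E j false w = some x → E i true w = some y →
    ((∃ z, E i true x = some z ∧ E j false y = some z) ↔ 0 < phiH j w)
  /-- (A5*) Dual half-primed square. -/
  A5d : ∀ (i j : Fin (n - 1)) (w x y : B), (i : ℕ) + 1 = (j : ℕ) →
    E j false w = some x → E i false w = some y → E j true w = none →
    ((∃ z, E j true y = some z ∧ E i true x = some z) ↔
      (phi j w = phi j y + 1 ∧ phi i w = phi i x + 1))
  /-- (A6*) Dual square. -/
  A6d : ∀ (i j : Fin (n - 1)) (w x y : B), (i : ℕ) + 1 = (j : ℕ) →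
    E j false w = some x → E i false w = some y → E j true w = none →
    ((∃ z, E j false y = some z ∧ E i false x = some z) ↔
      ((phi j w = phi j y + 1 ∧ phi i w = phi i x) ∨
       (phi j w = phi j y ∧ phi i w = phi i x + 1)))
  /-- (A7*) Dual half-primed octagon. -/
  A7d : ∀ (i j : Fin (n - 1)) (w x y : B), (i : ℕ) + 1 = (j : ℕ) →
    E j false w = some x → E i false w = some y → E j true w = none →
    (((∃ z, ((E j false y).bind (E j true)).bind (E i false) = some z ∧
            ((E i false x).bind (E i false)).bind (E j true) = some z) ∧
        E j false y ≠ E i false x) ↔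
      (phi j w = phi j y ∧ phi i w = phi i x ∧ phiH j w + 1 = phiH j y))
  /-- (A8*) Dual octagon. -/
  A8d : ∀ (i j : Fin (n - 1)) (w x y : B), (i : ℕ) + 1 = (j : ℕ) →
    E j false w = some x → E i false w = some y → E j true w = none →
    (((∃ z, ((E j false y).bind (E j false)).bind (E i false) = some z ∧
            ((E i false x).bind (E i false)).bind (E j false) = some z) ∧
        E j false y ≠ E i false x) ↔
      (phi j w = phi j y ∧ phi i w = phi i x ∧ 2 ≤ epsH j y))

namespace DoubledCrystal

variable {n : ℕ}

/-- One step along an `{i,i'}`-edge. -/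
def stringStep (C : DoubledCrystal n) (i : Fin (n - 1)) (x y : C.B) : Prop :=
  ∃ p, C.F i p x = some y

/-- `u` lies on the `{i,i'}`-string through `v`. -/
def SameString (C : DoubledCrystal n) (i : Fin (n - 1)) (v u : C.B) : Prop :=
  Relation.EqvGen (C.stringStep i) v u

/-- The `{i,i'}`-string through `v` is collapsed: every unprimed edge on it
coincides with the corresponding primed edge. -/
def Collapsed (C : DoubledCrystal n) (i : Fin (n - 1)) (v : C.B) : Prop :=
  ∀ u, C.SameString i v u → C.F i false u = C.F i true u

/-- One step along any edge of the graph. -/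
def step (C : DoubledCrystal n) (x y : C.B) : Prop :=
  ∃ i p, C.F i p x = some y

end DoubledCrystal

/-- **Highest weights are strict partitions.**  If `g` is a highest-weight
element of a doubled crystal (no incoming arrows, i.e. all raising operators
are undefined at `g`), then `wt(g) = (a_1, …, a_n)` satisfies `a_i ≥ a_{i+1}`
for all `i`, with strict inequality whenever `a_i > 0`; that is, `wt(g)` is a
strict partition. -/
theorem doubledCrystal_highest_weight_strict_partition {n : ℕ}
    (C : DoubledCrystal n) (g : C.B)
    (hg : ∀ (i : Fin (n - 1)) (p : Bool), C.E i p g = none) :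
    ∀ i : Fin (n - 1),
      C.wt g ⟨(i : ℕ) + 1, by have := i.isLt; omega⟩ ≤
        C.wt g ⟨(i : ℕ), by have := i.isLt; omega⟩ ∧
      (0 < C.wt g ⟨(i : ℕ), by have := i.isLt; omega⟩ →
        C.wt g ⟨(i : ℕ) + 1, by have := i.isLt; omega⟩ <
          C.wt g ⟨(i : ℕ), by have := i.isLt; omega⟩) := by
  intro i
  have hH : C.epsH i g = 0 := (C.E_none i g).1.mp (hg i false)
  have hP : C.epsP i g = 0 := (C.E_none i g).2.mp (hg i true)
  have heps : C.eps i g = 0 := by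
    rcases C.B1 i g with h | h
    · have := h.2.2.2.1; omega
    · have := h.1; omega
  have hK2 := C.K2 i g
  have hphi : C.wt g ⟨(i : ℕ), by have := i.isLt; omega⟩ = 0 ∨ 0 < C.phi i g := by
    rcases C.B1 i g with h | h
    · rcases Nat.eq_zero_or_pos (C.phi i g) with h0 | h0
      · exact Or.inl (h.2.2.2.2.2.2.2.mp h0)
      · exact Or.inr h0
    · have h1 := h.2.1
      have h2 := h.2.2
      omega
  refine ⟨by omega, fun hpos => ?_⟩
  rcases hphi with h | h <;> omega
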